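/- Let d ≥ 1, let (F_n)_{n≥0} be maps F_n : ℝ^d → ℝ^d, and let (P_n)_{n≥0} be real d×d idempotent matrices (P_n² = P_n). Let (ū_n) and (δ_n) be sequences in ℝ^d and define u_n := ū_n + (I − P_n) δ_n. Then for each n ≥ 0, the stable-correction equation (I − P_{n+1})(ū_{n+1} + (I − P_{n+1}) δ_{n+1} − F_n(ū_n + (I − P_n) δ_n)) = 0 holds if and only if u_{n+1} = P_{n+1} ū_{n+1} + (I − P_{n+1}) F_n(u_n). -/

import Mathlib

open Matrix

namespace Matrix

variable {n R : Type*} [Fintype n] [DecidableEq n] [Ring R]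

theorem mulVec_add_mulVec_sub_of_isIdempotentElem {Q : Matrix n n R} (hQ : IsIdempotentElem Q)
    (x y z : n → R) :
    Q *ᵥ (x + Q *ᵥ y - z) = x + Q *ᵥ y - ((1 - Q) *ᵥ x + Q *ᵥ z) := by
  rw [mulVec_sub, mulVec_add, mulVec_mulVec, hQ.eq, sub_mulVec, one_mulVec]
  abel

theorem mulVec_add_mulVec_sub_eq_zero_iff {Q : Matrix n n R} (hQ : IsIdempotentElem Q)
    (x y z : n → R) :
    Q *ᵥ (x + Q *ᵥ y - z) = 0 ↔ x + Q *ᵥ y = (1 - Q) *ᵥ x + Q *ᵥ z := by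
  rw [mulVec_add_mulVec_sub_of_isIdempotentElem hQ, sub_eq_zero]

end Matrix

theorem stable_correction_iff_synchronization_general
    (d : ℕ)
    (F : ℕ → (Fin d → ℝ) → (Fin d → ℝ))
    (P : ℕ → Matrix (Fin d) (Fin d) ℝ)
    (hPidem : ∀ n, P n * P n = P n)
    (ubar δ : ℕ → Fin d → ℝ)
    (u : ℕ → Fin d → ℝ)
    (hu : ∀ n, u n = ubar n + (1 - P n) *ᵥ δ n) :
    ∀ n : ℕ,
      (1 - P (n + 1)) *ᵥ
          (ubar (n + 1) + (1 - P (n + 1)) *ᵥ δ (n + 1)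
            - F n (ubar n + (1 - P n) *ᵥ δ n)) = 0
        ↔ u (n + 1) = P (n + 1) *ᵥ ubar (n + 1) + (1 - P (n + 1)) *ᵥ F n (u n) := by
  intro n
  have hQ : IsIdempotentElem (1 - P (n + 1)) := IsIdempotentElem.one_sub (hPidem (n + 1))
  rw [mulVec_add_mulVec_sub_eq_zero_iff hQ, sub_sub_cancel, hu, hu]

/-- The componentwise stable-correction equation of the projected Newton
data-assimilation method, `(I − P_{n+1})(ū_{n+1} + (I − P_{n+1})δ_{n+1} − F_n(ū_n + (I − P_n)δ_n)) = 0`,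
is equivalent to the forward synchronization iteration
`u_{n+1} = P_{n+1} ū_{n+1} + (I − P_{n+1}) F_n(u_n)` for `u_n = ū_n + (I − P_n)δ_n`. -/
theorem stable_correction_iff_synchronization
    (d : ℕ) (hd : 1 ≤ d)
    (F : ℕ → (Fin d → ℝ) → (Fin d → ℝ))
    (P : ℕ → Matrix (Fin d) (Fin d) ℝ)
    (hPidem : ∀ n, P n * P n = P n)
    (ubar δ : ℕ → Fin d → ℝ)
    (u : ℕ → Fin d → ℝ)
    (hu : ∀ n, u n = ubar n + (1 - P n) *ᵥ δ n) :
    ∀ n : ℕ,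
      (1 - P (n + 1)) *ᵥ
          (ubar (n + 1) + (1 - P (n + 1)) *ᵥ δ (n + 1)
            - F n (ubar n + (1 - P n) *ᵥ δ n)) = 0
        ↔ u (n + 1) = P (n + 1) *ᵥ ubar (n + 1) + (1 - P (n + 1)) *ᵥ F n (u n) :=
  stable_correction_iff_synchronization_general d F P hPidem ubar δ u hu
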